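/- Let H be a 2-shifted clique with segments V_1 < V_2, each inducing a clique, such that for u < u' in V_2, N(u') ∩ V_1 ⊆ N(u) ∩ V_1. Suppose φ : G → H is an ordered homomorphism, X = φ⁻¹(V_2), and f : G[X] → H[V_2] is an ordered homomorphism with f(u) ≤ φ(u) for all u ∈ X. Then the map φ' defined by φ'(u) = f(u) for u ∈ X and φ'(u) = φ(u) otherwise is an ordered homomorphism from G to H. -/

import Mathlib

/-!
Every vertex outside `X = φ⁻¹(V₂)` is sent into `V₁`, and `X` is an up-set, so `φ'` stays
monotone because `V₁` precedes `V₂`. Edges inside or outside `X` are handled by `f` and `φ`.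
For an edge `uv` with `u ∈ X`, `v ∉ X`, the vertex `φ v ∈ V₁` is adjacent to `φ u`, and the
shift condition passes this adjacency down to `f u ≤ φ u`.
-/

theorem isUpperSet_of_forall_lt {W : Type*} [Preorder W] {V₁ V₂ : Set W}
    (hcover : ∀ w ∉ V₂, w ∈ V₁) (horder : ∀ a ∈ V₁, ∀ b ∈ V₂, a < b) : IsUpperSet V₂ := by
  intro a b hab ha
  by_contra hb
  exact (horder b (hcover b hb) a ha).not_ge hab

theorem adj_of_shift_of_le {W : Type*} [PartialOrder W] {H : SimpleGraph W} {V₁ V₂ : Set W}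
    (hshift : ∀ u ∈ V₂, ∀ u' ∈ V₂, u < u' → ∀ w ∈ V₁, H.Adj w u' → H.Adj w u)
    {w a b : W} (hw : w ∈ V₁) (ha : a ∈ V₂) (hb : b ∈ V₂) (hab : a ≤ b) (h : H.Adj w b) :
    H.Adj w a := by
  rcases hab.lt_or_eq with hlt | rfl
  · exact hshift a ha b hb hlt w hw h
  · exact h

section Piecewise

variable {V W : Type*} (X : Set V) [∀ u, Decidable (u ∈ X)] (f φ : V → W)

theorem monotone_piecewise_of_isUpperSet [Preorder V] [Preorder W] (hX : IsUpperSet X)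
    (hf : MonotoneOn f X) (hφ : Monotone φ) (hcross : ∀ u ∉ X, ∀ v ∈ X, φ u ≤ f v) :
    Monotone (X.piecewise f φ) := by
  intro u v huv
  by_cases hu : u ∈ X
  · have hv := hX huv hu
    simpa [hu, hv] using hf hu hv huv
  · by_cases hv : v ∈ X
    · simpa [hu, hv] using hcross u hu v hv
    · simpa [hu, hv] using hφ huv

theorem adj_piecewise {G : SimpleGraph V} {H : SimpleGraph W}
    (hf : ∀ u ∈ X, ∀ v ∈ X, G.Adj u v → H.Adj (f u) (f v))
    (hφ : ∀ u v, G.Adj u v → H.Adj (φ u) (φ v))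
    (hcross : ∀ u ∈ X, ∀ v ∉ X, G.Adj u v → H.Adj (f u) (φ v)) {u v : V} (huv : G.Adj u v) :
    H.Adj (X.piecewise f φ u) (X.piecewise f φ v) := by
  by_cases hu : u ∈ X <;> by_cases hv : v ∈ X
  · simpa [hu, hv] using hf u hu v hv huv
  · simpa [hu, hv] using hcross u hu v hv huv
  · simpa [hu, hv] using (hcross v hv u hu huv.symm).symm
  · simpa [hu, hv] using hφ u v huv

end Piecewise

theorem stmt_13_general {V W : Type*} [LinearOrder V] [LinearOrder W]
    (G : SimpleGraph V) (H : SimpleGraph W) (V₁ V₂ : Set W)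
    (hpart : ∀ w, (w ∈ V₁ ∧ w ∉ V₂) ∨ (w ∈ V₂ ∧ w ∉ V₁))
    (horder : ∀ a ∈ V₁, ∀ b ∈ V₂, a < b)
    (hshift : ∀ u ∈ V₂, ∀ u' ∈ V₂, u < u' → ∀ w ∈ V₁, H.Adj w u' → H.Adj w u)
    (φ : V → W) (hφmono : Monotone φ)
    (hφhom : ∀ u v, G.Adj u v → H.Adj (φ u) (φ v))
    (X : Set V) (hX : X = φ ⁻¹' V₂)
    (f : V → W) (hfV2 : ∀ u ∈ X, f u ∈ V₂)
    (hfmono : ∀ u ∈ X, ∀ v ∈ X, u ≤ v → f u ≤ f v)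
    (hfhom : ∀ u ∈ X, ∀ v ∈ X, G.Adj u v → H.Adj (f u) (f v))
    (hfle : ∀ u ∈ X, f u ≤ φ u)
    (φ' : V → W) (hφ'X : ∀ u ∈ X, φ' u = f u) (hφ'nX : ∀ u ∉ X, φ' u = φ u) :
    Monotone φ' ∧ ∀ u v, G.Adj u v → H.Adj (φ' u) (φ' v) := by
  classical
  have hφ' : φ' = X.piecewise f φ := funext fun u => by
    by_cases hu : u ∈ X <;> simp [hu, hφ'X, hφ'nX]
  subst hφ' hX
  have hcover : ∀ w ∉ V₂, w ∈ V₁ := fun w hw =>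
    ((hpart w).resolve_right fun h => hw h.1).1
  refine ⟨monotone_piecewise_of_isUpperSet _ f φ
      ((isUpperSet_of_forall_lt hcover horder).preimage hφmono) hfmono hφmono ?_,
    fun u v => adj_piecewise _ f φ hfhom hφhom ?_⟩
  · exact fun u hu v hv => (horder _ (hcover _ hu) _ (hfV2 v hv)).le
  · exact fun u hu v hv huv =>
      (adj_of_shift_of_le hshift (hcover _ hv) (hfV2 u hu) hu (hfle u hu)
        (hφhom u v huv).symm).symm

/-- Replacement lemma for 2-shifted cliques: replacing the part of an ordered
homomorphism `φ` mapping into the last segment `V₂` by a smaller ordered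
homomorphism `f` again yields an ordered homomorphism. -/
theorem stmt_13 {V W : Type*} [LinearOrder V] [LinearOrder W]
    (G : SimpleGraph V) (H : SimpleGraph W) (V₁ V₂ : Set W)
    (hpart : ∀ w, (w ∈ V₁ ∧ w ∉ V₂) ∨ (w ∈ V₂ ∧ w ∉ V₁))
    (horder : ∀ a ∈ V₁, ∀ b ∈ V₂, a < b)
    (hclique1 : ∀ a ∈ V₁, ∀ b ∈ V₁, a ≠ b → H.Adj a b)
    (hclique2 : ∀ a ∈ V₂, ∀ b ∈ V₂, a ≠ b → H.Adj a b)
    (hshift : ∀ u ∈ V₂, ∀ u' ∈ V₂, u < u' → ∀ w ∈ V₁, H.Adj w u' → H.Adj w u)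
    (φ : V → W) (hφmono : Monotone φ)
    (hφhom : ∀ u v, G.Adj u v → H.Adj (φ u) (φ v))
    (X : Set V) (hX : X = φ ⁻¹' V₂)
    (f : V → W) (hfV2 : ∀ u ∈ X, f u ∈ V₂)
    (hfmono : ∀ u ∈ X, ∀ v ∈ X, u ≤ v → f u ≤ f v)
    (hfhom : ∀ u ∈ X, ∀ v ∈ X, G.Adj u v → H.Adj (f u) (f v))
    (hfle : ∀ u ∈ X, f u ≤ φ u)
    (φ' : V → W) (hφ'X : ∀ u ∈ X, φ' u = f u) (hφ'nX : ∀ u ∉ X, φ' u = φ u) :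
    Monotone φ' ∧ ∀ u v, G.Adj u v → H.Adj (φ' u) (φ' v) :=
  stmt_13_general G H V₁ V₂ hpart horder hshift φ hφmono hφhom X hX f hfV2 hfmono hfhom hfle φ' hφ'X
    hφ'nX
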